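/- Let n ≥ 4 and a be integers with 1 ≤ a ≤ n/2. Then the largest eigenvalue of the distance signless Laplacian of the complete bipartite graph K_{a,n−a} is q^𝒟(K_{a,n−a}) = (5n − 8 + √(9n² − 32a(n−a)))/2. -/

import Mathlib

open Finset Matrix

noncomputable def distMatrix {V : Type*} [Fintype V] (G : SimpleGraph V) : Matrix V V ℝ :=
  Matrix.of fun u v => (G.dist u v : ℝ)

theorem distMatrix_isHermitian {V : Type*} [Fintype V] (G : SimpleGraph V) :
    (distMatrix G).IsHermitian := by
  show (distMatrix G)ᴴ = distMatrix G
  ext i j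
  simp [distMatrix, Matrix.conjTranspose_apply, SimpleGraph.dist_comm]

noncomputable def transmission {V : Type*} [Fintype V] (G : SimpleGraph V) (v : V) : ℝ :=
  ∑ u, (G.dist v u : ℝ)

noncomputable def distSLMatrix {V : Type*} [Fintype V] [DecidableEq V] (G : SimpleGraph V) :
    Matrix V V ℝ :=
  Matrix.diagonal (transmission G) + distMatrix G

theorem distSLMatrix_isHermitian {V : Type*} [Fintype V] [DecidableEq V] (G : SimpleGraph V) :
    (distSLMatrix G).IsHermitian :=
  (Matrix.isHermitian_diagonal _).add (distMatrix_isHermitian G)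

noncomputable def maxEig {V : Type*} [Fintype V] [DecidableEq V] {A : Matrix V V ℝ}
    (hA : A.IsHermitian) : ℝ :=
  ⨆ i, hA.eigenvalues i

noncomputable def minEig {V : Type*} [Fintype V] [DecidableEq V] {A : Matrix V V ℝ}
    (hA : A.IsHermitian) : ℝ :=
  ⨅ i, hA.eigenvalues i

noncomputable def distSpread {V : Type*} [Fintype V] [DecidableEq V] (G : SimpleGraph V) : ℝ :=
  maxEig (distMatrix_isHermitian G) - minEig (distMatrix_isHermitian G)

noncomputable def distSLSpread {V : Type*} [Fintype V] [DecidableEq V] (G : SimpleGraph V) : ℝ :=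
  maxEig (distSLMatrix_isHermitian G) - minEig (distSLMatrix_isHermitian G)

/-!
In `K_{a,b}` two distinct vertices are at distance 2 inside a part and 1 across it, so `𝒬`
acts by `(𝒬x)ᵤ = (2a+b-4)xᵤ + 2S + T` on the part of size `a` and by
`(𝒬x)ᵥ = (a+2b-4)xᵥ + S + 2T` on the other one, where `S` and `T` are the sums of `x` over the
two parts. Summing these equations over each part shows that every eigenvalue other than
`2a+b-4` and `a+2b-4` is an eigenvalue of the quotient matrix `[[4a+b-4, b], [a, a+4b-4]]`.
Its larger root dominates the other candidates and, with an eigenvector constant on each part,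
is itself an eigenvalue of `𝒬`.
-/

open SimpleGraph

section Spectrum

variable {n K : Type*} [Fintype n] [DecidableEq n] [Field K]

theorem Matrix.mem_spectrum_iff_exists_mulVec_eq {A : Matrix n n K} {μ : K} :
    μ ∈ spectrum K A ↔ ∃ x ≠ 0, A *ᵥ x = μ • x := by
  rw [← spectrum_toLin', ← Module.End.hasEigenvalue_iff_mem_spectrum]
  constructor
  · intro h
    obtain ⟨x, hx⟩ := h.exists_hasEigenvector
    exact ⟨x, hx.2, by simpa using Module.End.mem_eigenspace_iff.mp hx.1⟩
  · rintro ⟨x, hx, hAx⟩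
    exact Module.End.hasEigenvalue_of_hasEigenvector
      ⟨Module.End.mem_eigenspace_iff.mpr (by simpa using hAx), hx⟩

theorem maxEig_eq_of_isGreatest {A : Matrix n n ℝ} (hA : A.IsHermitian) {μ : ℝ}
    (h : IsGreatest (spectrum ℝ A) μ) : maxEig hA = μ := by
  rw [maxEig, ← sSup_range, ← hA.spectrum_real_eq_range_eigenvalues]
  exact h.csSup_eq

end Spectrum

section CompleteBipartite

variable {V W : Type*}

theorem completeBipartiteGraph_dist_inl_inr (i : V) (j : W) :
    (completeBipartiteGraph V W).dist (.inl i) (.inr j) = 1 :=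
  dist_eq_one_iff_adj.mpr (by simp)

theorem completeBipartiteGraph_dist_inr_inl (i : W) (j : V) :
    (completeBipartiteGraph V W).dist (.inr i) (.inl j) = 1 :=
  dist_eq_one_iff_adj.mpr (by simp)

theorem completeBipartiteGraph_dist_inl_inl [Nonempty W] {i j : V} (hij : i ≠ j) :
    (completeBipartiteGraph V W).dist (.inl i) (.inl j) = 2 := by
  obtain ⟨k⟩ := ‹Nonempty W›
  have : (completeBipartiteGraph V W).edist (.inl i) (.inl j) = 2 :=
    edist_eq_two_iff.mpr ⟨by simpa, by simp, ⟨.inr k, by simp [mem_commonNeighbors]⟩⟩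
  simp [SimpleGraph.dist, this]

theorem completeBipartiteGraph_dist_inr_inr [Nonempty V] {i j : W} (hij : i ≠ j) :
    (completeBipartiteGraph V W).dist (.inr i) (.inr j) = 2 := by
  obtain ⟨k⟩ := ‹Nonempty V›
  have : (completeBipartiteGraph V W).edist (.inr i) (.inr j) = 2 :=
    edist_eq_two_iff.mpr ⟨by simpa, by simp, ⟨.inl k, by simp [mem_commonNeighbors]⟩⟩
  simp [SimpleGraph.dist, this]

variable [Fintype V] [Fintype W]

theorem completeBipartiteGraph_sum_dist_inl_mul [Nonempty W] (i : V) (y : V ⊕ W → ℝ) :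
    ∑ u, ((completeBipartiteGraph V W).dist (.inl i) u : ℝ) * y u =
      2 * ∑ j, y (.inl j) - 2 * y (.inl i) + ∑ j, y (.inr j) := by
  classical
  have hV : ∑ j, ((completeBipartiteGraph V W).dist (.inl i) (.inl j) : ℝ) * y (.inl j) =
      ∑ j, (2 * y (.inl j) - if i = j then 2 * y (.inl j) else 0) := by
    refine Finset.sum_congr rfl fun j _ => ?_
    by_cases h : i = j <;> simp [h, completeBipartiteGraph_dist_inl_inl]
  simp [Fintype.sum_sum_type, hV, Finset.sum_sub_distrib, Finset.mul_sum,
    completeBipartiteGraph_dist_inl_inr]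

theorem completeBipartiteGraph_sum_dist_inr_mul [Nonempty V] (i : W) (y : V ⊕ W → ℝ) :
    ∑ u, ((completeBipartiteGraph V W).dist (.inr i) u : ℝ) * y u =
      ∑ j, y (.inl j) + (2 * ∑ j, y (.inr j) - 2 * y (.inr i)) := by
  classical
  have hW : ∑ j, ((completeBipartiteGraph V W).dist (.inr i) (.inr j) : ℝ) * y (.inr j) =
      ∑ j, (2 * y (.inr j) - if i = j then 2 * y (.inr j) else 0) := by
    refine Finset.sum_congr rfl fun j _ => ?_
    by_cases h : i = j <;> simp [h, completeBipartiteGraph_dist_inr_inr]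
  simp [Fintype.sum_sum_type, hW, Finset.sum_sub_distrib, Finset.mul_sum,
    completeBipartiteGraph_dist_inr_inl]

variable [DecidableEq V] [DecidableEq W]

theorem distSLMatrix_completeBipartiteGraph_mulVec_inl [Nonempty W] (x : V ⊕ W → ℝ) (i : V) :
    (distSLMatrix (completeBipartiteGraph V W) *ᵥ x) (.inl i) =
      (2 * Fintype.card V + Fintype.card W - 4) * x (.inl i)
        + 2 * ∑ j, x (.inl j) + ∑ j, x (.inr j) := by
  have htr : transmission (completeBipartiteGraph V W) (.inl i) =
      2 * Fintype.card V - 2 + Fintype.card W := by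
    simpa [transmission] using completeBipartiteGraph_sum_dist_inl_mul i 1
  rw [distSLMatrix, add_mulVec, Pi.add_apply, mulVec_diagonal, htr]
  simp only [distMatrix, mulVec, dotProduct, of_apply]
  rw [completeBipartiteGraph_sum_dist_inl_mul]
  ring

theorem distSLMatrix_completeBipartiteGraph_mulVec_inr [Nonempty V] (x : V ⊕ W → ℝ) (i : W) :
    (distSLMatrix (completeBipartiteGraph V W) *ᵥ x) (.inr i) =
      (Fintype.card V + 2 * Fintype.card W - 4) * x (.inr i)
        + ∑ j, x (.inl j) + 2 * ∑ j, x (.inr j) := by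
  have htr : transmission (completeBipartiteGraph V W) (.inr i) =
      Fintype.card V + (2 * Fintype.card W - 2) := by
    simpa [transmission] using completeBipartiteGraph_sum_dist_inr_mul i 1
  rw [distSLMatrix, add_mulVec, Pi.add_apply, mulVec_diagonal, htr]
  simp only [distMatrix, mulVec, dotProduct, of_apply]
  rw [completeBipartiteGraph_sum_dist_inr_mul]
  ring

end CompleteBipartite

section LargerRoot

noncomputable def largerRoot (p q r : ℝ) : ℝ := (p + q + √((p - q) ^ 2 + 4 * r)) / 2

variable {p q r : ℝ}

theorem largerRoot_sub_mul_sub (hr : 0 ≤ r) :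
    (largerRoot p q r - p) * (largerRoot p q r - q) = r := by
  have hs := Real.sq_sqrt (show 0 ≤ (p - q) ^ 2 + 4 * r by positivity)
  unfold largerRoot
  linear_combination hs / 4

theorem le_largerRoot_of_sub_mul_sub_eq {μ : ℝ} (h : (μ - p) * (μ - q) = r) :
    μ ≤ largerRoot p q r := by
  have : 2 * μ - p - q ≤ √((p - q) ^ 2 + 4 * r) :=
    Real.le_sqrt_of_sq_le (by linear_combination 4 * h)
  unfold largerRoot
  linarith

theorem left_le_largerRoot (hr : 0 ≤ r) : p ≤ largerRoot p q r := by
  have : p - q ≤ √((p - q) ^ 2 + 4 * r) := Real.le_sqrt_of_sq_le (by linarith)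
  unfold largerRoot
  linarith

theorem right_le_largerRoot (hr : 0 ≤ r) : q ≤ largerRoot p q r := by
  have : q - p ≤ √((p - q) ^ 2 + 4 * r) := Real.le_sqrt_of_sq_le (by nlinarith)
  unfold largerRoot
  linarith

end LargerRoot

section CompleteBipartiteSpectrum

variable {V W : Type*} [Fintype V] [Fintype W] [DecidableEq V] [DecidableEq W]
  [Nonempty V] [Nonempty W]

theorem eq_or_eq_or_sub_mul_sub_eq_of_mem_spectrum_distSLMatrix_completeBipartiteGraph {μ : ℝ}
    (hμ : μ ∈ spectrum ℝ (distSLMatrix (completeBipartiteGraph V W))) :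
    μ = 2 * Fintype.card V + Fintype.card W - 4 ∨
      μ = Fintype.card V + 2 * Fintype.card W - 4 ∨
      (μ - (4 * Fintype.card V + Fintype.card W - 4)) *
        (μ - (Fintype.card V + 4 * Fintype.card W - 4)) = Fintype.card V * Fintype.card W := by
  obtain ⟨x, hx, hQx⟩ := Matrix.mem_spectrum_iff_exists_mulVec_eq.mp hμ
  set a : ℝ := ↑(Fintype.card V)
  set b : ℝ := ↑(Fintype.card W)
  set S := ∑ j, x (.inl j)
  set T := ∑ j, x (.inr j)
  have rowV (i : V) : (μ - (2 * a + b - 4)) * x (.inl i) = 2 * S + T := by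
    have := congrFun hQx (.inl i)
    rw [distSLMatrix_completeBipartiteGraph_mulVec_inl] at this
    simp only [Pi.smul_apply, smul_eq_mul] at this
    linear_combination -this
  have rowW (j : W) : (μ - (a + 2 * b - 4)) * x (.inr j) = S + 2 * T := by
    have := congrFun hQx (.inr j)
    rw [distSLMatrix_completeBipartiteGraph_mulVec_inr] at this
    simp only [Pi.smul_apply, smul_eq_mul] at this
    linear_combination -this
  have sumV : (μ - (4 * a + b - 4)) * S = a * T := by
    have : ∑ i, (μ - (2 * a + b - 4)) * x (.inl i) = ∑ _i : V, (2 * S + T) :=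
      Fintype.sum_congr _ _ rowV
    rw [← Finset.mul_sum, Finset.sum_const, Finset.card_univ, nsmul_eq_mul] at this
    linear_combination this
  have sumW : (μ - (a + 4 * b - 4)) * T = b * S := by
    have : ∑ j, (μ - (a + 2 * b - 4)) * x (.inr j) = ∑ _j : W, (S + 2 * T) :=
      Fintype.sum_congr _ _ rowW
    rw [← Finset.mul_sum, Finset.sum_const, Finset.card_univ, nsmul_eq_mul] at this
    linear_combination this
  by_cases hST : S = 0 ∧ T = 0
  · obtain ⟨u, hu⟩ := Function.ne_iff.mp hx
    cases u with
    | inl i =>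
      have := rowV i
      rw [hST.1, hST.2] at this
      exact .inl (sub_eq_zero.mp ((mul_eq_zero.mp (by simpa using this)).resolve_right hu))
    | inr j =>
      have := rowW j
      rw [hST.1, hST.2] at this
      exact .inr (.inl (sub_eq_zero.mp ((mul_eq_zero.mp (by simpa using this)).resolve_right hu)))
  · refine .inr (.inr ?_)
    rcases not_and_or.mp hST with hS | hT
    · exact mul_right_cancel₀ hS (by linear_combination (μ - (a + 4 * b - 4)) * sumV + a * sumW)
    · exact mul_right_cancel₀ hT (by linear_combination (μ - (4 * a + b - 4)) * sumW + b * sumV)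

theorem isGreatest_spectrum_distSLMatrix_completeBipartiteGraph :
    IsGreatest (spectrum ℝ (distSLMatrix (completeBipartiteGraph V W)))
      (largerRoot (4 * Fintype.card V + Fintype.card W - 4)
        (Fintype.card V + 4 * Fintype.card W - 4) (Fintype.card V * Fintype.card W)) := by
  set a : ℝ := ↑(Fintype.card V)
  set b : ℝ := ↑(Fintype.card W)
  set ρ := largerRoot (4 * a + b - 4) (a + 4 * b - 4) (a * b)
  have hab : 0 ≤ a * b := by positivity
  refine ⟨Matrix.mem_spectrum_iff_exists_mulVec_eq.mpr ?_, fun μ hμ => ?_⟩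
  · refine ⟨Sum.elim (fun _ => b) (fun _ => ρ - (4 * a + b - 4)), fun h => ?_,
      funext fun u => ?_⟩
    · have := congrFun h (.inl (Classical.arbitrary V))
      simp [b] at this
    · have hρ := largerRoot_sub_mul_sub (p := 4 * a + b - 4) (q := a + 4 * b - 4) hab
      cases u with
      | inl i =>
        rw [distSLMatrix_completeBipartiteGraph_mulVec_inl]
        simp only [Sum.elim_inl, Sum.elim_inr, Finset.sum_const, Finset.card_univ, nsmul_eq_mul,
          Pi.smul_apply, smul_eq_mul]
        ring
      | inr j =>
        rw [distSLMatrix_completeBipartiteGraph_mulVec_inr]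
        simp only [Sum.elim_inl, Sum.elim_inr, Finset.sum_const, Finset.card_univ, nsmul_eq_mul,
          Pi.smul_apply, smul_eq_mul]
        linear_combination -hρ
  · rcases eq_or_eq_or_sub_mul_sub_eq_of_mem_spectrum_distSLMatrix_completeBipartiteGraph hμ
      with h | h | h
    · linarith [left_le_largerRoot (p := 4 * a + b - 4) (q := a + 4 * b - 4) hab]
    · linarith [right_le_largerRoot (p := 4 * a + b - 4) (q := a + 4 * b - 4) hab]
    · exact le_largerRoot_of_sub_mul_sub_eq h

end CompleteBipartiteSpectrum

theorem stmt10_general (n a : ℕ) (ha1 : 1 ≤ a) (ha2 : 2*a ≤ n) :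
    maxEig (distSLMatrix_isHermitian (completeBipartiteGraph (Fin a) (Fin (n - a)))) =
      (5*(n : ℝ) - 8 + Real.sqrt (9*(n : ℝ)^2 - 32*a*((n : ℝ) - a))) / 2 := by
  have : Nonempty (Fin a) := ⟨⟨0, ha1⟩⟩
  have : Nonempty (Fin (n - a)) := ⟨⟨0, by omega⟩⟩
  rw [maxEig_eq_of_isGreatest _ isGreatest_spectrum_distSLMatrix_completeBipartiteGraph]
  simp only [Fintype.card_fin, Nat.cast_sub (show a ≤ n by omega), largerRoot]
  congr 2
  · ring
  · congr 1
    ring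

theorem stmt10 (n a : ℕ) (hn : 4 ≤ n) (ha1 : 1 ≤ a) (ha2 : 2*a ≤ n) :
    maxEig (distSLMatrix_isHermitian (completeBipartiteGraph (Fin a) (Fin (n - a)))) =
      (5*(n : ℝ) - 8 + Real.sqrt (9*(n : ℝ)^2 - 32*a*((n : ℝ) - a))) / 2 :=
  stmt10_general n a ha1 ha2
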